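/- Let N = (V, A, c) be a network and X ⊆ V. Then the full flow vitality group centrality φ^N(X) := Σ over arcs (y,z) ∈ A with φ^N_{yz} > 0 of φ^N_{yz}(X)/φ^N_{yz} and the full flow betweenness group centrality λ^N(X) := Σ over arcs (y,z) ∈ A with φ^N_{yz} > 0 of λ^N_{yz}(X)/φ^N_{yz} satisfy φ^N(X) ≤ λ^N(X); moreover, when X = {x} is a singleton, φ^N(x) = λ^N(x). -/

import Mathlib

/-!
Networks on the complete digraph: capacities `c : V → V → ℕ` with no loops
(arcs are ordered pairs of distinct vertices; loops are given capacity 0).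
-/

structure Network (V : Type*) where
  c : V → V → ℕ
  no_loop : ∀ v, c v v = 0

namespace NetFlow

variable {V : Type*} [Fintype V] [DecidableEq V]

/-- `f` is a flow from `y` to `z` in `N`. -/
def IsFlow (N : Network V) (y z : V) (f : V → V → ℕ) : Prop :=
  (∀ u v, f u v ≤ N.c u v) ∧
  (∀ x, x ≠ y → x ≠ z → ∑ u, f u x = ∑ u, f x u)

/-- The value of a flow from `y`. -/
def flowValue (f : V → V → ℕ) (y : V) : ℤ :=
  (∑ u, (f y u : ℤ)) - ∑ u, (f u y : ℤ)

/-- The maximum flow value `φ^N_{yz}`. -/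
noncomputable def maxFlowValue (N : Network V) (y z : V) : ℕ :=
  sSup {m : ℕ | ∃ f, IsFlow N y z f ∧ flowValue f y = (m : ℤ)}

/-- `f` is a maximum flow from `y` to `z` in `N`. -/
def IsMaxFlow (N : Network V) (y z : V) (f : V → V → ℕ) : Prop :=
  IsFlow N y z f ∧ flowValue f y = (maxFlowValue N y z : ℤ)

/-- The network `N_X`: capacities of arcs incident to `X` are set to zero. -/
def removeVerts (N : Network V) (X : Finset V) : Network V where
  c u v := if u ∈ X ∨ v ∈ X then 0 else N.c u v
  no_loop v := by simp [N.no_loop v]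

/-- `φ^N_{yz}(X) = φ^N_{yz} - φ^{N_X}_{yz}`. -/
noncomputable def phiDrop (N : Network V) (y z : V) (X : Finset V) : ℤ :=
  (maxFlowValue N y z : ℤ) - (maxFlowValue (removeVerts N X) y z : ℤ)

/-- The (consecutive) arcs of a list of vertices. -/
def pathArcs (p : List V) : List (V × V) := p.zip p.tail

/-- `p` is a path from `y` to `z` in `N`: at least two distinct vertices, starting at `y`,
ending at `z`, with all consecutive arcs of positive capacity. -/
def IsPath (N : Network V) (y z : V) (p : List V) : Prop :=
  2 ≤ p.length ∧ p.Nodup ∧ p.head? = some y ∧ p.getLast? = some z ∧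
    p.Chain' fun u v => 1 ≤ N.c u v

/-- `p` is a cycle in `N`. -/
def IsCycle (N : Network V) (p : List V) : Prop :=
  3 ≤ p.length ∧ p.dropLast.Nodup ∧ p.head? = p.getLast? ∧
    p.Chain' fun u v => 1 ≤ N.c u v

/-- A sequence of arc-disjoint paths from `y` to `z` in `N`: each component is a path, and
each arc `a` is used by at most `c a` components. -/
def IsPathSeq (N : Network V) (y z : V) (γ : List (List V)) : Prop :=
  (∀ p ∈ γ, IsPath N y z p) ∧
  ∀ u v : V, γ.countP (fun p => decide ((u, v) ∈ pathArcs p)) ≤ N.c u v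

/-- `λ^N_{yz}`: the maximum length of a sequence of arc-disjoint paths from `y` to `z`. -/
noncomputable def maxSeqLen (N : Network V) (y z : V) : ℕ :=
  sSup {m : ℕ | ∃ γ : List (List V), IsPathSeq N y z γ ∧ γ.length = m}

/-- `M^N_{yz}`: the sequences of arc-disjoint paths from `y` to `z` of maximum length. -/
def MaxSeqs (N : Network V) (y z : V) : Set (List (List V)) :=
  {γ | IsPathSeq N y z γ ∧ γ.length = maxSeqLen N y z}

/-- `l_X(γ)`: the number of components of `γ` having a vertex in `X`. -/
def lX (X : Finset V) (γ : List (List V)) : ℕ :=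
  γ.countP fun p => p.any fun x => decide (x ∈ X)

/-- `λ^N_{yz}(X)`: the minimum of `l_X` over maximum-length sequences of arc-disjoint paths. -/
noncomputable def lambdaX (N : Network V) (y z : V) (X : Finset V) : ℕ :=
  sInf {n : ℕ | ∃ γ ∈ MaxSeqs N y z, lX X γ = n}

/-- The flow through a vertex: `f(x) = Σ_{a exiting x} f(a)` if `x ∉ {y,z}`, `v(f)` otherwise. -/
def vertexFlow (f : V → V → ℕ) (y z x : V) : ℤ :=
  if x = y ∨ x = z then flowValue f y else ∑ u, (f x u : ℤ)

/-- `δ^N_{yz}(X)`: the minimum of `f(X) = Σ_{x∈X} f(x)` over maximum flows `f`. -/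
noncomputable def deltaX (N : Network V) (y z : V) (X : Finset V) : ℕ :=
  sInf {n : ℕ | ∃ f, IsMaxFlow N y z f ∧ (∑ x ∈ X, vertexFlow f y z x) = (n : ℤ)}

/-- The flow `f_γ` associated with a sequence of arc-disjoint paths. -/
def seqFlow (γ : List (List V)) (u v : V) : ℕ :=
  γ.countP fun p => decide ((u, v) ∈ pathArcs p)

/-- The path (or cycle) function `χ_p` of a path or cycle `p`. -/
def chi (p : List V) (u v : V) : ℕ := (pathArcs p).count (u, v)

/-- `(γ, w)` is a decomposition of the flow `f`: `γ` is a sequence of `v(f)` paths from `y`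
to `z`, `w` a sequence of cycles, and `f = Σ_j χ_{γ_j} + Σ_j χ_{w_j}`. -/
def IsDecomposition (N : Network V) (y z : V) (f : V → V → ℕ)
    (γ w : List (List V)) : Prop :=
  (∀ p ∈ γ, IsPath N y z p) ∧ (∀ q ∈ w, IsCycle N q) ∧
  (γ.length : ℤ) = flowValue f y ∧
  ∀ u v : V, f u v = (γ.map fun p => chi p u v).sum + (w.map fun q => chi q u v).sum

/-- The forward arcs of a generalized path given by vertices `p` and directions `d`. -/
def forwardArcs (p : List V) (d : List Bool) : List (V × V) :=
  ((p.zip p.tail).zip d).filterMap fun e => if e.2 then some e.1 else none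

/-- The backward arcs of a generalized path given by vertices `p` and directions `d`. -/
def backwardArcs (p : List V) (d : List Bool) : List (V × V) :=
  ((p.zip p.tail).zip d).filterMap fun e => if e.2 then none else some (e.1.2, e.1.1)

/-- `(p, d)` is a generalized path from `y` to `z`: distinct vertices `x_1 = y, …, x_m = z`
(`m ≥ 2`), the `i`-th arc being `(x_i, x_{i+1})` (forward, `d_i = true`) or `(x_{i+1}, x_i)`
(backward, `d_i = false`). -/
def IsGenPath (y z : V) (p : List V) (d : List Bool) : Prop :=
  2 ≤ p.length ∧ p.Nodup ∧ p.head? = some y ∧ p.getLast? = some z ∧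
    d.length + 1 = p.length

/-- `(p, d)` is an augmenting path for `f` from `y` to `z` in `N`. -/
def IsAugPath (N : Network V) (y z : V) (f : V → V → ℕ)
    (p : List V) (d : List Bool) : Prop :=
  IsGenPath y z p d ∧
  (∀ a ∈ forwardArcs p d, f a.1 a.2 < N.c a.1 a.2) ∧
  (∀ a ∈ backwardArcs p d, 1 ≤ f a.1 a.2)

/-- `χ_σ` for a generalized path `σ = (p, d)`: `+1` on forward arcs, `-1` on backward arcs. -/
def chiGen (p : List V) (d : List Bool) (u v : V) : ℤ :=
  ((forwardArcs p d).count (u, v) : ℤ) - ((backwardArcs p d).count (u, v) : ℤ)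

/-- The full flow vitality group centrality measure `φ^N(X)`. -/
noncomputable def phiGC (N : Network V) (X : Finset V) : ℝ :=
  ∑ a ∈ Finset.univ.filter (fun a : V × V => a.1 ≠ a.2 ∧ 0 < maxFlowValue N a.1 a.2),
    (phiDrop N a.1 a.2 X : ℝ) / (maxFlowValue N a.1 a.2 : ℝ)

/-- The full flow betweenness group centrality measure `λ^N(X)`. -/
noncomputable def lambdaGC (N : Network V) (X : Finset V) : ℝ :=
  ∑ a ∈ Finset.univ.filter (fun a : V × V => a.1 ≠ a.2 ∧ 0 < maxFlowValue N a.1 a.2),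
    (lambdaX N a.1 a.2 X : ℝ) / (maxFlowValue N a.1 a.2 : ℝ)

end NetFlow

/-!
Both measures sum over the same pairs `(y, z)`, so it suffices to compare `φ_{yz}(X)` with
`λ_{yz}(X)` pair by pair. Flow decomposition splits a maximum flow into `φ_{yz}` arc-disjoint
`y`–`z` paths, so `λ_{yz} = φ_{yz}`. Dropping from an optimal sequence in `M_{yz}` the
`λ_{yz}(X)` paths that meet `X` leaves arc-disjoint paths of `N_X`, whence
`φ^{N_X}_{yz} ≥ φ_{yz} - λ_{yz}(X)`.

For a single vertex `x ≠ z`, start from a maximum flow of `N_x`, which sends nothing out of `x`,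
and augment it `φ_{yz}(x)` times to a maximum flow of `N`. An augmenting path leaves `x` at most
once, so at most `φ_{yz}(x)` units leave `x`, and decomposing this flow gives a sequence in
`M_{yz}` with at most `φ_{yz}(x)` paths through `x`. For `x = z` both sides equal `φ_{yz}`.
-/

namespace List

variable {α : Type*}

theorem exists_nodup_isChain_of_reflTransGen {r : α → α → Prop} {a b : α}
    (h : Relation.ReflTransGen r a b) :
    ∃ l : List α, l.Nodup ∧ l.head? = some a ∧ l.getLast? = some b ∧ l.IsChain r := by
  induction h using Relation.ReflTransGen.head_induction_on with
  | refl => exact ⟨[b], nodup_singleton b, rfl, rfl, isChain_singleton b⟩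
  | @head a c hac _ ih =>
    obtain ⟨l, hnd, hhead, hlast, hchain⟩ := ih
    by_cases ha : a ∈ l
    · obtain ⟨s, t, rfl⟩ := append_of_mem ha
      exact ⟨a :: t, hnd.sublist (sublist_append_right s _), rfl,
        by rwa [getLast?_append_cons] at hlast, hchain.suffix (suffix_append s _)⟩
    · obtain ⟨t, rfl⟩ : ∃ t, l = c :: t := ⟨l.tail, by cases l <;> simp_all⟩
      exact ⟨a :: c :: t, nodup_cons.2 ⟨ha, hnd⟩, rfl, by rwa [getLast?_cons_cons],
        isChain_cons_cons.2 ⟨hac, hchain⟩⟩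

theorem filterMap_zip_sublist {β : Type*} (h : α × β → Option α)
    (hh : ∀ e, h e = none ∨ h e = some e.1) :
    ∀ (l : List α) (d : List β), (l.zip d).filterMap h <+ l
  | [], _ => by simp
  | _ :: _, [] => by simp
  | a :: l, b :: d => by
    rw [zip_cons_cons, filterMap_cons]
    rcases hh (a, b) with he | he <;> rw [he]
    · exact (filterMap_zip_sublist h hh l d).cons a
    · exact (filterMap_zip_sublist h hh l d).cons_cons a

theorem filterMap_zip_map_self (g : α → Bool) (l : List α) :
    (l.zip (l.map g)).filterMap (fun e => if e.2 then some e.1 else none) = l.filter g := by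
  induction l with
  | nil => rfl
  | cons a t ih => cases h : g a <;> simp [h, ih]

end List

namespace NetFlow

open List Relation

section Paths

variable {V : Type*}

@[simp]
theorem pathArcs_cons_cons (a b : V) (t : List V) :
    pathArcs (a :: b :: t) = (a, b) :: pathArcs (b :: t) := rfl

theorem isChain_iff_forall_mem_pathArcs {r : V → V → Prop} :
    ∀ {p : List V}, p.IsChain r ↔ ∀ a ∈ pathArcs p, r a.1 a.2
  | [] | [_] => by simp [pathArcs]
  | a :: b :: t => by
    rw [isChain_cons_cons, isChain_iff_forall_mem_pathArcs (p := b :: t)]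
    simp

theorem mem_of_mem_pathArcs {p : List V} {u v : V} (h : (u, v) ∈ pathArcs p) :
    u ∈ p ∧ v ∈ p :=
  ⟨(of_mem_zip h).1, mem_of_mem_tail (of_mem_zip h).2⟩

theorem map_fst_pathArcs : ∀ p : List V, (pathArcs p).map Prod.fst = p.dropLast
  | [] | [_] => rfl
  | a :: b :: t => by simp [map_fst_pathArcs (b :: t)]

theorem length_pathArcs (p : List V) : (pathArcs p).length = p.length - 1 := by
  simp [pathArcs]

theorem _root_.List.Nodup.pathArcs {p : List V} (hp : p.Nodup) : (pathArcs p).Nodup :=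
  Nodup.of_map Prod.fst (map_fst_pathArcs p ▸ hp.sublist (dropLast_sublist p))

theorem forwardArcs_sublist (p : List V) (d : List Bool) : forwardArcs p d <+ pathArcs p :=
  filterMap_zip_sublist _ (fun e => by cases e.2 <;> simp) _ _

theorem backwardArcs_eq_map_swap (p : List V) (d : List Bool) :
    backwardArcs p d = (forwardArcs p (d.map (!·))).map Prod.swap := by
  simp only [backwardArcs, forwardArcs, zip_map_right, filterMap_map, map_filterMap]
  congr 1
  funext ⟨a, e⟩
  cases e <;> simp [Prod.swap]

theorem forwardArcs_map_pathArcs (p : List V) (g : V × V → Bool) :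
    forwardArcs p ((pathArcs p).map g) = (pathArcs p).filter g :=
  filterMap_zip_map_self g (pathArcs p)

theorem IsPath.isGenPath {N : Network V} {y z : V} {p : List V} (hp : IsPath N y z p) :
    IsGenPath y z p ((pathArcs p).map fun _ => true) := by
  obtain ⟨hlen, hnd, hy, hz, -⟩ := hp
  refine ⟨hlen, hnd, hy, hz, ?_⟩
  rw [length_map, length_pathArcs]
  omega

theorem exists_nodup_isChain_of_reflTransGen_of_ne {r : V → V → Prop} {y z : V}
    (h : ReflTransGen r y z) (hyz : y ≠ z) : ∃ p : List V, 2 ≤ p.length ∧ p.Nodup ∧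
      p.head? = some y ∧ p.getLast? = some z ∧ p.IsChain r := by
  obtain ⟨p, hnd, hy, hz, hc⟩ := exists_nodup_isChain_of_reflTransGen h
  refine ⟨p, ?_, hnd, hy, hz, hc⟩
  match p, hy, hz with
  | [], hy, _ => simp at hy
  | [_], hy, hz => simp_all
  | _ :: _ :: _, _, _ => simp

end Paths

section Flows

variable {V : Type*} [Fintype V] {N : Network V} {y z : V}

def netOutflow (g : V → V → ℤ) (x : V) : ℤ := ∑ u, g x u - ∑ u, g u x

theorem flowValue_eq_netOutflow (f : V → V → ℕ) (y : V) :
    flowValue f y = netOutflow (fun u v => (f u v : ℤ)) y := rfl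

theorem netOutflow_add (g h : V → V → ℤ) (x : V) :
    netOutflow (g + h) x = netOutflow g x + netOutflow h x := by
  simp only [netOutflow, Pi.add_apply, Finset.sum_add_distrib]
  ring

theorem netOutflow_neg (g : V → V → ℤ) (x : V) : netOutflow (-g) x = -netOutflow g x := by
  simp only [netOutflow, Pi.neg_apply, Finset.sum_neg_distrib]
  ring

theorem isFlow_iff {f : V → V → ℕ} : IsFlow N y z f ↔ (∀ u v, f u v ≤ N.c u v) ∧
    ∀ x, x ≠ y → x ≠ z → netOutflow (fun u v => (f u v : ℤ)) x = 0 := by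
  simp only [IsFlow, netOutflow, sub_eq_zero, eq_comm (a := ∑ u, (f _ u : ℤ))]
  exact_mod_cast Iff.rfl

theorem IsFlow.of_eq_add {f f' : V → V → ℕ} {g : V → V → ℤ} (hf : IsFlow N y z f)
    (hcap : ∀ u v, f' u v ≤ N.c u v) (hf' : ∀ u v, (f' u v : ℤ) = f u v + g u v)
    (hg : ∀ x, x ≠ y → x ≠ z → netOutflow g x = 0) :
    IsFlow N y z f' ∧ flowValue f' y = flowValue f y + netOutflow g y := by
  have hsplit : (fun u v => (f' u v : ℤ)) = (fun u v => (f u v : ℤ)) + g := funext₂ hf'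
  refine ⟨isFlow_iff.2 ⟨hcap, fun x hy hz => ?_⟩, ?_⟩
  · rw [hsplit, netOutflow_add, (isFlow_iff.1 hf).2 x hy hz, hg x hy hz, add_zero]
  · rw [flowValue_eq_netOutflow, hsplit, netOutflow_add, flowValue_eq_netOutflow]

theorem IsFlow.mono {N' : Network V} {f : V → V → ℕ} (hf : IsFlow N y z f)
    (hc : ∀ u v, N.c u v ≤ N'.c u v) : IsFlow N' y z f :=
  ⟨fun u v => (hf.1 u v).trans (hc u v), hf.2⟩

theorem isFlow_zero : IsFlow N y z fun _ _ => 0 :=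
  ⟨fun _ _ => Nat.zero_le _, fun _ _ _ => rfl⟩

theorem bddAbove_flowValues :
    BddAbove {m : ℕ | ∃ f, IsFlow N y z f ∧ flowValue f y = (m : ℤ)} := by
  refine ⟨∑ u, N.c y u, fun m ⟨f, hf, hm⟩ => ?_⟩
  have hout : ∑ u, (f y u : ℤ) ≤ ∑ u, (N.c y u : ℤ) :=
    Finset.sum_le_sum fun u _ => by exact_mod_cast hf.1 y u
  have hin : 0 ≤ ∑ u, (f u y : ℤ) := Finset.sum_nonneg fun u _ => by positivity
  have : (m : ℤ) ≤ ∑ u, (N.c y u : ℤ) := by rw [← hm, flowValue]; linarith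
  exact_mod_cast this

theorem le_maxFlowValue {f : V → V → ℕ} {m : ℕ} (hf : IsFlow N y z f)
    (hm : flowValue f y = (m : ℤ)) : m ≤ maxFlowValue N y z :=
  le_csSup bddAbove_flowValues ⟨f, hf, hm⟩

theorem IsFlow.flowValue_le {f : V → V → ℕ} (hf : IsFlow N y z f) :
    flowValue f y ≤ maxFlowValue N y z := by
  obtain ⟨m, hm | hm⟩ := Int.eq_nat_or_neg (flowValue f y)
  · exact hm ▸ Int.ofNat_le.2 (le_maxFlowValue hf hm)
  · omega

theorem exists_isMaxFlow (N : Network V) (y z : V) : ∃ f, IsMaxFlow N y z f :=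
  Nat.sSup_mem (s := {m : ℕ | ∃ f, IsFlow N y z f ∧ flowValue f y = (m : ℤ)})
    ⟨0, _, isFlow_zero, by simp [flowValue]⟩ bddAbove_flowValues

theorem exists_cut_of_not_reflTransGen {r : V → V → Prop} (h : ¬ReflTransGen r y z) :
    ∃ S : Finset V, y ∈ S ∧ z ∉ S ∧ ∀ u ∈ S, ∀ v ∉ S, ¬r u v := by
  classical
  refine ⟨Finset.univ.filter (ReflTransGen r y), by simp [ReflTransGen.refl], by simpa using h,
    ?_⟩
  simp only [Finset.mem_filter, Finset.mem_univ, true_and]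
  exact fun u hu v hv huv => hv (hu.tail huv)

end Flows

section

variable {V : Type*} [DecidableEq V] {N : Network V} {y z : V}

def arcIndicator (a b : V) (u v : V) : ℤ := if u = a ∧ v = b then 1 else 0

theorem chiGen_cons_cons (a b : V) (t : List V) (e : Bool) (d : List Bool) :
    chiGen (a :: b :: t) (e :: d) =
      chiGen (b :: t) d + if e then arcIndicator a b else -arcIndicator b a := by
  funext u v
  cases e <;> simp [chiGen, forwardArcs, backwardArcs, arcIndicator, count_cons] <;>
    split_ifs <;> grind

theorem chi_eq_chiGen (p : List V) :
    (fun u v => (chi p u v : ℤ)) = chiGen p ((pathArcs p).map fun _ => true) := by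
  funext u v
  simp only [chi, chiGen, backwardArcs_eq_map_swap, List.map_map, Function.comp_def,
    Bool.not_true, forwardArcs_map_pathArcs, filter_true, filter_false, map_nil, count_nil,
    Nat.cast_zero, sub_zero]

theorem chi_eq_ite {p : List V} (hp : p.Nodup) (u v : V) :
    chi p u v = if (u, v) ∈ pathArcs p then 1 else 0 :=
  hp.pathArcs.count

theorem IsAugPath.add_chiGen_mem_Icc {f : V → V → ℕ} {p : List V} {d : List Bool}
    (hap : IsAugPath N y z f p d) (hf : ∀ u v, f u v ≤ N.c u v) (u v : V) :
    0 ≤ (f u v : ℤ) + chiGen p d u v ∧ (f u v : ℤ) + chiGen p d u v ≤ N.c u v := by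
  obtain ⟨⟨-, hnd, -⟩, hfwd, hbwd⟩ := hap
  have hFnd : (forwardArcs p d).Nodup := (forwardArcs_sublist p d).nodup hnd.pathArcs
  have hBnd : (backwardArcs p d).Nodup := backwardArcs_eq_map_swap p d ▸
    ((forwardArcs_sublist _ _).nodup hnd.pathArcs).map Prod.swap_injective
  have hlt : (u, v) ∈ forwardArcs p d → f u v < N.c u v := hfwd (u, v)
  have hge : (u, v) ∈ backwardArcs p d → 1 ≤ f u v := hbwd (u, v)
  have := hf u v
  rw [chiGen, hFnd.count, hBnd.count]
  split_ifs with hF hB hB <;> push_cast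
  · omega
  · have := hlt hF
    omega
  · have := hge hB
    omega
  · omega

theorem removeVerts_c_le (N : Network V) (X : Finset V) (u v : V) :
    (removeVerts N X).c u v ≤ N.c u v := by
  simp only [removeVerts]
  split_ifs <;> simp

theorem IsPath.removeVerts {X : Finset V} {p : List V} (hp : IsPath N y z p)
    (hX : ∀ v ∈ p, v ∉ X) : IsPath (removeVerts N X) y z p := by
  obtain ⟨h2, hnd, hy, hz, hc⟩ := hp
  refine ⟨h2, hnd, hy, hz, isChain_iff_forall_mem_pathArcs.2 fun ⟨u, v⟩ ha => ?_⟩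
  have huv := mem_of_mem_pathArcs ha
  simpa [NetFlow.removeVerts, hX u huv.1, hX v huv.2] using
    isChain_iff_forall_mem_pathArcs.1 hc _ ha

theorem IsPathSeq.filter_avoiding {γ : List (List V)} (hγ : IsPathSeq N y z γ) (X : Finset V) :
    IsPathSeq (removeVerts N X) y z (γ.filter fun p => !p.any fun x => decide (x ∈ X)) := by
  have havoid :
      ∀ p ∈ γ.filter (fun p => !p.any fun x => decide (x ∈ X)), ∀ v ∈ p, v ∉ X := by
    intro p hp v hv hvX
    simp only [mem_filter, Bool.not_eq_true', any_eq_false, decide_eq_true_eq] at hp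
    exact hp.2 v hv hvX
  refine ⟨fun p hp => (hγ.1 p (mem_filter.1 hp).1).removeVerts (havoid p hp), fun u v => ?_⟩
  by_cases huv : u ∈ X ∨ v ∈ X
  · refine (countP_eq_zero.2 fun p hp ha => ?_).trans_le (Nat.zero_le _)
    have := mem_of_mem_pathArcs (of_decide_eq_true ha)
    exact huv.elim (havoid p hp u this.1) (havoid p hp v this.2)
  · simp only [NetFlow.removeVerts, if_neg huv]
    exact filter_sublist.countP_le.trans (hγ.2 u v)

theorem seqFlow_cons_of_nodup {p : List V} (hp : p.Nodup) (γ : List (List V)) (u v : V) :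
    seqFlow (p :: γ) u v = seqFlow γ u v + chi p u v := by
  simp [seqFlow, countP_cons, chi_eq_ite hp]

theorem lambdaX_le_lX {γ : List (List V)} (hγ : γ ∈ MaxSeqs N y z) (X : Finset V) :
    lambdaX N y z X ≤ lX X γ :=
  Nat.sInf_le ⟨γ, hγ, rfl⟩

end

section

variable {V : Type*} [Fintype V] [DecidableEq V] {N : Network V} {y z : V}

theorem netOutflow_arcIndicator (a b x : V) :
    netOutflow (arcIndicator a b) x = (if x = a then 1 else 0) - (if x = b then 1 else 0) := by
  simp [netOutflow, arcIndicator, ite_and]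

theorem netOutflow_chiGen (x : V) : ∀ (p : List V) (d : List Bool), p.length ≤ d.length + 1 →
    netOutflow (chiGen p d) x =
      (if p.head? = some x then 1 else 0) - (if p.getLast? = some x then 1 else 0)
  | [], d, _ => by simp [netOutflow, chiGen, forwardArcs, backwardArcs]
  | [a], d, _ => by simp [netOutflow, chiGen, forwardArcs, backwardArcs]
  | _ :: _ :: _, [], h => by simp at h
  | a :: b :: t, e :: d, h => by
    have ih := netOutflow_chiGen x (b :: t) d (by simpa using h)
    rw [chiGen_cons_cons, netOutflow_add, ih, getLast?_cons_cons]
    cases e <;> simp only [head?_cons, Option.some.injEq, netOutflow_neg, netOutflow_arcIndicator,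
      Bool.false_eq_true, if_true, if_false, eq_comm (a := x)] <;> ring

theorem IsGenPath.netOutflow_chiGen {p : List V} {d : List Bool}
    (h : IsGenPath y z p d) (x : V) :
    netOutflow (chiGen p d) x = (if x = y then 1 else 0) - (if x = z then 1 else 0) := by
  obtain ⟨-, -, hy, hz, hd⟩ := h
  rw [NetFlow.netOutflow_chiGen x p d hd.ge, hy, hz]
  simp only [Option.some.injEq, eq_comm (a := x)]

theorem IsPath.netOutflow_chi {p : List V} (hp : IsPath N y z p) (x : V) :
    netOutflow (fun u v => (chi p u v : ℤ)) x =
      (if x = y then 1 else 0) - (if x = z then 1 else 0) := by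
  rw [chi_eq_chiGen]
  exact hp.isGenPath.netOutflow_chiGen x

theorem sum_count_pair_left (l : List (V × V)) (x : V) :
    ∑ u, l.count (x, u) = (l.map Prod.fst).count x := by
  induction l with
  | nil => simp
  | cons a l ih =>
    simp only [count_cons, Finset.sum_add_distrib, ih, map_cons, beq_iff_eq]
    obtain ⟨a, b⟩ := a
    simp [Prod.ext_iff, ite_and, eq_comm (a := a)]

theorem sum_chi_eq_count_dropLast (p : List V) (x : V) : ∑ u, chi p x u = p.dropLast.count x := by
  simp only [chi, sum_count_pair_left, map_fst_pathArcs]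

theorem sum_netOutflow_eq_cut (g : V → V → ℤ) (S : Finset V) :
    ∑ x ∈ S, netOutflow g x = ∑ x ∈ S, ∑ u ∈ Sᶜ, (g x u - g u x) := by
  have hinner : ∑ x ∈ S, ∑ u ∈ S, (g x u - g u x) = 0 := by
    simp only [Finset.sum_sub_distrib]
    rw [Finset.sum_comm (s := S) (t := S) (f := fun x u => g u x), sub_self]
  calc ∑ x ∈ S, netOutflow g x
      = ∑ x ∈ S, (∑ u ∈ S, (g x u - g u x) + ∑ u ∈ Sᶜ, (g x u - g u x)) :=
        Finset.sum_congr rfl fun x _ => by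
          rw [Finset.sum_add_sum_compl, netOutflow, Finset.sum_sub_distrib]
    _ = _ := by rw [Finset.sum_add_distrib, hinner, zero_add]

theorem IsFlow.flowValue_eq_cut {f : V → V → ℕ} (hf : IsFlow N y z f) {S : Finset V}
    (hy : y ∈ S) (hz : z ∉ S) :
    flowValue f y = ∑ x ∈ S, ∑ u ∈ Sᶜ, ((f x u : ℤ) - f u x) := by
  rw [← sum_netOutflow_eq_cut, Finset.sum_eq_single_of_mem y hy]
  · rfl
  · exact fun x hx hxy => (isFlow_iff.1 hf).2 x hxy (ne_of_mem_of_not_mem hx hz)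

theorem IsFlow.exists_path {f : V → V → ℕ} (hf : IsFlow N y z f) (hyz : y ≠ z)
    (hpos : 0 < flowValue f y) :
    ∃ p, IsPath N y z p ∧ ∀ a ∈ pathArcs p, 1 ≤ f a.1 a.2 := by
  have hreach : ReflTransGen (fun u v => 1 ≤ f u v) y z := by
    by_contra h
    obtain ⟨S, hy, hz, hS⟩ := exists_cut_of_not_reflTransGen h
    have : flowValue f y ≤ 0 := by
      rw [hf.flowValue_eq_cut hy hz]
      refine Finset.sum_nonpos fun u hu => Finset.sum_nonpos fun v hv => ?_
      have := hS u hu v (Finset.mem_compl.1 hv)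
      omega
    omega
  obtain ⟨p, hlen, hnd, hp_y, hp_z, hc⟩ := exists_nodup_isChain_of_reflTransGen_of_ne hreach hyz
  exact ⟨p, ⟨hlen, hnd, hp_y, hp_z, hc.imp fun {u v} h => h.trans (hf.1 u v)⟩,
    isChain_iff_forall_mem_pathArcs.1 hc⟩

theorem IsFlow.exists_augPath {f : V → V → ℕ} (hf : IsFlow N y z f) (hyz : y ≠ z)
    (hlt : flowValue f y < maxFlowValue N y z) : ∃ p d, IsAugPath N y z f p d := by
  let r u v := f u v < N.c u v ∨ 1 ≤ f v u
  have hreach : ReflTransGen r y z := by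
    by_contra h
    obtain ⟨S, hy, hz, hS⟩ := exists_cut_of_not_reflTransGen h
    obtain ⟨g, hg, hgv⟩ := exists_isMaxFlow N y z
    -- `f` saturates every arc leaving `S` and empties every arc entering it
    have : flowValue g y ≤ flowValue f y := by
      rw [hg.flowValue_eq_cut hy hz, hf.flowValue_eq_cut hy hz]
      refine Finset.sum_le_sum fun u hu => Finset.sum_le_sum fun v hv => ?_
      have hsat := hS u hu v (Finset.mem_compl.1 hv)
      simp only [r, not_or, not_lt] at hsat
      have := hg.1 u v
      omega
    omega
  obtain ⟨p, hlen, hnd, hp_y, hp_z, hc⟩ := exists_nodup_isChain_of_reflTransGen_of_ne hreach hyz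
  refine ⟨p, (pathArcs p).map fun a => decide (f a.1 a.2 < N.c a.1 a.2),
    ⟨hlen, hnd, hp_y, hp_z, by rw [length_map, length_pathArcs]; omega⟩, ?_, ?_⟩
  · rw [forwardArcs_map_pathArcs]
    intro a ha
    simpa using (mem_filter.1 ha).2
  · rw [backwardArcs_eq_map_swap, List.map_map, forwardArcs_map_pathArcs]
    intro a ha
    obtain ⟨b, hb, rfl⟩ := mem_map.1 ha
    rw [mem_filter] at hb
    have := isChain_iff_forall_mem_pathArcs.1 hc b hb.1
    simp only [r, Function.comp_apply, Bool.not_eq_true', decide_eq_false_iff_not] at this hb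
    simpa [hb.2] using this

theorem sum_chiGen_le_one {p : List V} (hp : p.Nodup) (d : List Bool) (x : V) :
    ∑ u, chiGen p d x u ≤ 1 := by
  calc ∑ u, chiGen p d x u ≤ ∑ u, ((forwardArcs p d).count (x, u) : ℤ) :=
        Finset.sum_le_sum fun u _ => by simp [chiGen]
    _ = ((forwardArcs p d).map Prod.fst).count x := by
        rw [← sum_count_pair_left]
        push_cast
        rfl
    _ ≤ p.dropLast.count x := by
        rw [← map_fst_pathArcs]
        exact_mod_cast ((forwardArcs_sublist p d).map Prod.fst).count_le x
    _ ≤ 1 := by exact_mod_cast nodup_iff_count_le_one.1 (hp.sublist (dropLast_sublist p)) x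

theorem IsAugPath.augment {f : V → V → ℕ} {p : List V} {d : List Bool}
    (hap : IsAugPath N y z f p d) (hf : IsFlow N y z f) (hyz : y ≠ z) :
    ∃ f', IsFlow N y z f' ∧ flowValue f' y = flowValue f y + 1 ∧
      ∀ x, ∑ u, (f' x u : ℤ) ≤ ∑ u, (f x u : ℤ) + 1 := by
  have hbounds := hap.add_chiGen_mem_Icc hf.1
  let f' u v := ((f u v : ℤ) + chiGen p d u v).toNat
  have hf' : ∀ u v, (f' u v : ℤ) = f u v + chiGen p d u v :=
    fun u v => Int.toNat_of_nonneg (hbounds u v).1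
  have hcap : ∀ u v, f' u v ≤ N.c u v := fun u v => by
    have := hf' u v
    have := (hbounds u v).2
    omega
  obtain ⟨hflow, hval⟩ := hf.of_eq_add hcap hf' fun x hy hz => by
    simp [hap.1.netOutflow_chiGen, hy, hz]
  refine ⟨f', hflow, by simpa [hap.1.netOutflow_chiGen, hyz] using hval, fun x => ?_⟩
  simp only [hf', Finset.sum_add_distrib, add_le_add_iff_left]
  exact sum_chiGen_le_one hap.1.2.1 d x

theorem IsFlow.exists_isMaxFlow_outflow_le {g : V → V → ℕ} (hg : IsFlow N y z g)
    (hyz : y ≠ z) (x : V) : ∃ f, IsMaxFlow N y z f ∧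
      ∑ u, (f x u : ℤ) ≤ ∑ u, (g x u : ℤ) + (maxFlowValue N y z - flowValue g y) := by
  obtain ⟨n, hn⟩ := Int.eq_ofNat_of_zero_le (sub_nonneg.2 hg.flowValue_le)
  induction n generalizing g with
  | zero => exact ⟨g, ⟨hg, by omega⟩, by omega⟩
  | succ n ih =>
    obtain ⟨p, d, hap⟩ := hg.exists_augPath hyz (by omega)
    obtain ⟨g', hg', hval, hout⟩ := hap.augment hg hyz
    obtain ⟨f, hf, hle⟩ := ih hg' (by omega)
    exact ⟨f, hf, by linarith [hout x]⟩

theorem netOutflow_seqFlow {γ : List (List V)} (hγ : ∀ p ∈ γ, IsPath N y z p) (x : V) :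
    netOutflow (fun u v => (seqFlow γ u v : ℤ)) x =
      γ.length * ((if x = y then 1 else 0) - (if x = z then 1 else 0)) := by
  induction γ with
  | nil => simp [netOutflow, seqFlow]
  | cons p γ ih =>
    obtain ⟨hp, hγ⟩ := forall_mem_cons.1 hγ
    have hsplit : (fun u v => (seqFlow (p :: γ) u v : ℤ)) =
        (fun u v => (seqFlow γ u v : ℤ)) + fun u v => (chi p u v : ℤ) := by
      funext u v
      simp [seqFlow_cons_of_nodup hp.2.1]
    rw [hsplit, netOutflow_add, ih hγ, hp.netOutflow_chi, length_cons]
    push_cast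
    ring

theorem IsPathSeq.isFlow {γ : List (List V)} (hγ : IsPathSeq N y z γ) :
    IsFlow N y z (seqFlow γ) :=
  isFlow_iff.2 ⟨hγ.2, fun x hy hz => by simp [netOutflow_seqFlow hγ.1, hy, hz]⟩

theorem IsPathSeq.length_le_maxFlowValue {γ : List (List V)} (hγ : IsPathSeq N y z γ)
    (hyz : y ≠ z) : γ.length ≤ maxFlowValue N y z :=
  le_maxFlowValue hγ.isFlow (by simp [flowValue_eq_netOutflow, netOutflow_seqFlow hγ.1, hyz])

theorem IsFlow.exists_paths {f : V → V → ℕ} (hf : IsFlow N y z f) (hyz : y ≠ z) {k : ℕ}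
    (hk : flowValue f y = k) : ∃ γ : List (List V), (∀ p ∈ γ, IsPath N y z p) ∧
      γ.length = k ∧ ∀ u v, seqFlow γ u v ≤ f u v := by
  induction k generalizing f with
  | zero => exact ⟨[], by simp, rfl, fun u v => Nat.zero_le _⟩
  | succ k ih =>
    obtain ⟨p, hp, hpf⟩ := hf.exists_path hyz (by omega)
    have hchi : ∀ u v, chi p u v ≤ f u v := fun u v => by
      rw [chi_eq_ite hp.2.1]
      split_ifs with h
      exacts [hpf _ h, Nat.zero_le _]
    obtain ⟨hf', hval⟩ := hf.of_eq_add (f' := fun u v => f u v - chi p u v)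
      (g := -fun u v => (chi p u v : ℤ)) (fun u v => (Nat.sub_le _ _).trans (hf.1 u v))
      (fun u v => by simp [Nat.cast_sub (hchi u v), sub_eq_add_neg])
      (fun x hy hz => by simp [netOutflow_neg, hp.netOutflow_chi, hy, hz])
    obtain ⟨γ, hγ, hlen, hle⟩ :=
      ih hf' (by simp [netOutflow_neg, hp.netOutflow_chi, hyz] at hval; omega)
    refine ⟨p :: γ, forall_mem_cons.2 ⟨hp, hγ⟩, by simp [hlen], fun u v => ?_⟩
    have := hle u v
    have := hchi u v
    rw [seqFlow_cons_of_nodup hp.2.1]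
    omega

theorem maxSeqLen_eq_maxFlowValue (hyz : y ≠ z) : maxSeqLen N y z = maxFlowValue N y z := by
  obtain ⟨f, hf, hfv⟩ := exists_isMaxFlow N y z
  obtain ⟨γ, hγ, hlen, hle⟩ := hf.exists_paths hyz hfv
  have hseq : IsPathSeq N y z γ := ⟨hγ, fun u v => (hle u v).trans (hf.1 u v)⟩
  have hbound :
      ∀ m ∈ {m | ∃ δ, IsPathSeq N y z δ ∧ δ.length = m}, m ≤ maxFlowValue N y z := by
    rintro _ ⟨δ, hδ, rfl⟩
    exact hδ.length_le_maxFlowValue hyz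
  exact le_antisymm (csSup_le ⟨_, γ, hseq, rfl⟩ hbound)
    (hlen ▸ le_csSup ⟨_, hbound⟩ ⟨γ, hseq, rfl⟩)

theorem IsMaxFlow.exists_mem_maxSeqs {f : V → V → ℕ} (hf : IsMaxFlow N y z f)
    (hyz : y ≠ z) :
    ∃ γ ∈ MaxSeqs N y z, ∀ u v, seqFlow γ u v ≤ f u v := by
  obtain ⟨γ, hγ, hlen, hle⟩ := hf.1.exists_paths hyz hf.2
  exact ⟨γ, ⟨⟨hγ, fun u v => (hle u v).trans (hf.1.1 u v)⟩,
    by rw [hlen, maxSeqLen_eq_maxFlowValue hyz]⟩, hle⟩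

theorem exists_lX_eq_lambdaX (hyz : y ≠ z) (X : Finset V) :
    ∃ γ ∈ MaxSeqs N y z, lX X γ = lambdaX N y z X := by
  obtain ⟨f, hf⟩ := exists_isMaxFlow N y z
  obtain ⟨γ, hγ, -⟩ := hf.exists_mem_maxSeqs hyz
  exact Nat.sInf_mem (s := {n | ∃ γ ∈ MaxSeqs N y z, lX X γ = n}) ⟨_, γ, hγ, rfl⟩

theorem phiDrop_le_lambdaX (hyz : y ≠ z) (X : Finset V) :
    phiDrop N y z X ≤ lambdaX N y z X := by
  obtain ⟨γ, ⟨hγ, hlen⟩, hlX⟩ := exists_lX_eq_lambdaX (N := N) hyz X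
  have hle := (hγ.filter_avoiding X).length_le_maxFlowValue hyz
  have hsplit : (γ.filter fun p => !p.any fun x => decide (x ∈ X)).length + lX X γ =
      γ.length := by
    rw [lX, ← countP_eq_length_filter, Nat.add_comm,
      length_eq_countP_add_countP (fun p => p.any fun x => decide (x ∈ X))]
    congr 2
    funext p
    cases p.any fun x => decide (x ∈ X) <;> rfl
  rw [maxSeqLen_eq_maxFlowValue hyz] at hlen
  unfold phiDrop
  omega

theorem maxFlowValue_removeVerts_eq_zero (hyz : y ≠ z) {X : Finset V} (hz : z ∈ X) :
    maxFlowValue (removeVerts N X) y z = 0 := by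
  obtain ⟨f, hf, hv⟩ := exists_isMaxFlow (removeVerts N X) y z
  have hzero : ∀ u, f u z = 0 ∧ f z u = 0 := fun u =>
    ⟨Nat.le_zero.1 ((hf.1 u z).trans (by simp [removeVerts, hz])),
      Nat.le_zero.1 ((hf.1 z u).trans (by simp [removeVerts, hz]))⟩
  rw [hf.flowValue_eq_cut (S := {z}ᶜ) (by simpa using hyz) (by simp), compl_compl] at hv
  simp [hzero] at hv
  omega

theorem lX_singleton_le_sum_seqFlow {x : V} (hxz : x ≠ z) :
    ∀ γ : List (List V), (∀ p ∈ γ, IsPath N y z p) → lX {x} γ ≤ ∑ u, seqFlow γ x u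
  | [], _ => by simp [lX]
  | p :: γ, hγ => by
    obtain ⟨hp, hγ⟩ := forall_mem_cons.1 hγ
    have ih := lX_singleton_le_sum_seqFlow hxz γ hγ
    have hpx : (if x ∈ p then 1 else 0) ≤ p.dropLast.count x := by
      split_ifs with hx
      · exact count_pos_iff.2 (mem_dropLast_of_mem_of_ne_getLast? hx (by simp [hp.2.2.2.1, hxz]))
      · exact Nat.zero_le _
    simp only [lX, countP_cons, seqFlow_cons_of_nodup hp.2.1, Finset.sum_add_distrib,
      sum_chi_eq_count_dropLast] at ih ⊢
    simp only [Finset.mem_singleton, any_eq_true, decide_eq_true_eq, exists_eq_right] at ih ⊢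
    omega

theorem lambdaX_singleton_le_phiDrop (hyz : y ≠ z) {x : V} (hxz : x ≠ z) :
    (lambdaX N y z {x} : ℤ) ≤ phiDrop N y z {x} := by
  obtain ⟨g, hg, hgv⟩ := exists_isMaxFlow (removeVerts N {x}) y z
  have hgx : ∀ u, g x u = 0 := fun u => Nat.le_zero.1 ((hg.1 x u).trans (by simp [removeVerts]))
  obtain ⟨f, hf, hfx⟩ := (hg.mono (removeVerts_c_le N {x})).exists_isMaxFlow_outflow_le hyz x
  obtain ⟨γ, hγ, hle⟩ := hf.exists_mem_maxSeqs hyz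
  have h1 := lambdaX_le_lX hγ {x}
  have h2 := lX_singleton_le_sum_seqFlow hxz γ hγ.1.1
  have h3 : ∑ u, seqFlow γ x u ≤ ∑ u, f x u := Finset.sum_le_sum fun u _ => hle x u
  have h4 : ((∑ u, f x u : ℕ) : ℤ) = ∑ u, (f x u : ℤ) := Nat.cast_sum _ _
  simp only [hgx, hgv, Nat.cast_zero, Finset.sum_const_zero, zero_add] at hfx
  unfold phiDrop
  omega

theorem phiDrop_singleton_eq_lambdaX (hyz : y ≠ z) (x : V) :
    phiDrop N y z {x} = lambdaX N y z {x} := by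
  refine le_antisymm (phiDrop_le_lambdaX hyz {x}) ?_
  rcases eq_or_ne x z with rfl | hxz
  · obtain ⟨γ, hγ, hlX⟩ := exists_lX_eq_lambdaX (N := N) hyz {x}
    have : lX {x} γ ≤ γ.length := countP_le_length
    rw [phiDrop, maxFlowValue_removeVerts_eq_zero hyz (Finset.mem_singleton_self x),
      ← maxSeqLen_eq_maxFlowValue hyz, ← hγ.2]
    omega
  · exact lambdaX_singleton_le_phiDrop hyz hxz

end

end NetFlow

theorem phiGC_le_lambdaGC_general {V : Type*} [Fintype V] [DecidableEq V]
    (N : Network V) (X : Finset V) :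
    NetFlow.phiGC N X ≤ NetFlow.lambdaGC N X ∧
      ∀ x : V, NetFlow.phiGC N {x} = NetFlow.lambdaGC N {x} := by
  refine ⟨Finset.sum_le_sum fun a ha => ?_, fun x => Finset.sum_congr rfl fun a ha => ?_⟩
  · gcongr
    exact_mod_cast NetFlow.phiDrop_le_lambdaX (Finset.mem_filter.1 ha).2.1 X
  · rw [NetFlow.phiDrop_singleton_eq_lambdaX (Finset.mem_filter.1 ha).2.1 x, Int.cast_natCast]

/-- the full flow vitality and full flow betweenness group centrality
measures satisfy `φ^N(X) ≤ λ^N(X)`, with equality on singletons. -/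
theorem phiGC_le_lambdaGC {V : Type*} [Fintype V] [DecidableEq V]
    (hV : 2 ≤ Fintype.card V) (N : Network V) (X : Finset V) :
    NetFlow.phiGC N X ≤ NetFlow.lambdaGC N X ∧
      ∀ x : V, NetFlow.phiGC N {x} = NetFlow.lambdaGC N {x} :=
  phiGC_le_lambdaGC_general N X
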